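/- Let g be a finite-dimensional real Lie algebra equipped with an invariant inner product (⟨[ζ,ξ],η⟩ + ⟨ξ,[ζ,η]⟩ = 0 for all ξ,η,ζ ∈ g) and an orthonormal basis (e_a); set f_{abc} = ⟨e_a, [e_b, e_c]⟩. Let A be a commutative ℝ-algebra, let ρ : g → Der(A) be a Lie algebra homomorphism into the derivations of A, and let {·,·} : A × A → A be an ℝ-bilinear, antisymmetric map which is a derivation in each argument, satisfies the invariance condition ρ(ξ){f,g} = {ρ(ξ)f, g} + {f, ρ(ξ)g} for all ξ ∈ g and f,g ∈ A, and satisfies the quasi-Jacobi identity {{f₁,f₂},f₃} + {{f₂,f₃},f₁} + {{f₃,f₁},f₂} = Σ_{a,b,c} f_{abc} · ρ(e_a)f₁ · ρ(e_b)f₂ · ρ(e_c)f₃ for all f₁,f₂,f₃ ∈ A. Then the subalgebra of invariants A^g = {f ∈ A : ρ(ξ)f = 0 for all ξ ∈ g} is closed under {·,·}, and the restriction of {·,·} to A^g satisfies the Jacobi identity, so that (A^g, ·, {·,·}) is a Poisson algebra. -/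
import Mathlib


open scoped RealInnerProductSpace BigOperators

/-- Let `𝔤` be a finite-dimensional real Lie algebra with an invariant inner
product and an orthonormal basis `e`, with structure constants
`f a b c = ⟪e a, ⁅e b, e c⁆⟫`. Let `A` be a commutative `ℝ`-algebra,
`ρ : 𝔤 → Der(A)` a Lie algebra homomorphism, and `P` an `ℝ`-bilinear
antisymmetric bracket on `A`, a derivation in each argument, invariant
under `ρ`, and satisfying the quasi-Jacobi identity with defect
`∑ f a b c • (ρ(e a) f₁ · ρ(e b) f₂ · ρ(e c) f₃)`. Then the invariants
`A^𝔤` are closed under `P`, and `P` restricted to `A^𝔤` satisfies the Jacobi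
identity, so the invariants form a Poisson algebra. -/
theorem invariants_form_poisson_algebra
    {𝔤 : Type*} [LieRing 𝔤] [LieAlgebra ℝ 𝔤]
    [NormedAddCommGroup 𝔤] [InnerProductSpace ℝ 𝔤] [FiniteDimensional ℝ 𝔤]
    (hip : ∀ ζ ξ η : 𝔤, ⟪⁅ζ, ξ⁆, η⟫ + ⟪ξ, ⁅ζ, η⁆⟫ = 0)
    {ι : Type*} [Fintype ι] (e : OrthonormalBasis ι ℝ 𝔤)
    {A : Type*} [CommRing A] [Algebra ℝ A]
    (ρ : 𝔤 →ₗ⁅ℝ⁆ Derivation ℝ A A)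
    (P : A →ₗ[ℝ] A →ₗ[ℝ] A)
    (hanti : ∀ f g : A, P f g = -P g f)
    (hleibR : ∀ f g h : A, P f (g * h) = g * P f h + P f g * h)
    (hleibL : ∀ f g h : A, P (g * h) f = g * P h f + P g f * h)
    (hinvar : ∀ (ξ : 𝔤) (f g : A), ρ ξ (P f g) = P (ρ ξ f) g + P f (ρ ξ g))
    (hquasi : ∀ f₁ f₂ f₃ : A,
        P (P f₁ f₂) f₃ + P (P f₂ f₃) f₁ + P (P f₃ f₁) f₂ =
          ∑ a, ∑ b, ∑ c,
            ⟪e a, ⁅e b, e c⁆⟫ • (ρ (e a) f₁ * ρ (e b) f₂ * ρ (e c) f₃)) :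
    (∀ f g : A, (∀ ξ : 𝔤, ρ ξ f = 0) → (∀ ξ : 𝔤, ρ ξ g = 0) →
        ∀ ξ : 𝔤, ρ ξ (P f g) = 0) ∧
    (∀ f₁ f₂ f₃ : A, (∀ ξ : 𝔤, ρ ξ f₁ = 0) → (∀ ξ : 𝔤, ρ ξ f₂ = 0) →
        (∀ ξ : 𝔤, ρ ξ f₃ = 0) →
        P (P f₁ f₂) f₃ + P (P f₂ f₃) f₁ + P (P f₃ f₁) f₂ = 0) := by
  constructor
  · intro f g hf hg ξ
    simp [hinvar, hf, hg]
  · intro f₁ f₂ f₃ h1 h2 h3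
    rw [hquasi]
    simp [h1]
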